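/- arXiv:1110.6398 — 2 statements merged into one kernel-verified Lean document; each statement's English description precedes it below -/
import Mathlib

section
/- Let b ≥ 2, let E_0, E_1, …, E_k be finite sets of nonnegative integers such that P_{E_0}(X)·P_{E_1}(X)⋯P_{E_k}(X) ≡ 1 + X + ⋯ + X^{b−1} (mod X^b − 1) in ℤ[X], and let 0 ≤ l_1 ≤ ⋯ ≤ l_k be integers. Let D' be a set of nonnegative integers with P_{D'}(X) ≡ P_{E_0}(X)·P_{E_1}(X^{b^{l_1}})⋯P_{E_k}(X^{b^{l_k}}) (mod X^{b^{l_k+1}} − 1) in ℤ[X] (a weak product-form digit set). Then D' satisfies condition (P1) with respect to b, and hence the Kenyon condition with respect to b. -/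
/-!
For a divisor `d > 1` of `b`, `Φ_d` divides both `X^b - 1` and `1 + X + ⋯ + X^{b-1}`, hence the
product of the `P_{E_i}`, and being prime it divides one factor `P_{E_i}`. Then `Φ_d(X^{b^{l_i}})`
divides `P_{E_i}(X^{b^{l_i}})` and `X^{b^{l_i+1}} - 1`, a divisor of `X^{b^{l_k+1}} - 1`, hence it
divides `P_{D'}`. For the Kenyon condition write `m = b^t m₀` with `b ∤ m₀`: the order `d` of
`ω^{m₀}`, `ω = e^{2πi/b}`, is a divisor `> 1` of `b`, and `z = e^{2πi m/b^{j+t+1}}` satisfies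
`z^{b^j} = ω^{m₀}`, a primitive `d`-th root of unity, so `z` is a root of `Φ_d(X^{b^j})`.
-/

open Polynomial

/-- The mask polynomial `P_A(X) = ∑_{a ∈ A} X^a ∈ ℤ[X]` of a finite set of naturals. -/
noncomputable def mask (A : Finset ℕ) : Polynomial ℤ := ∑ a ∈ A, X ^ a

/-- The Kenyon condition with respect to `b`. -/
def Kenyon (b : ℕ) (D : Finset ℕ) : Prop :=
  ∀ m : ℕ, 1 ≤ m → ∃ k : ℕ, 1 ≤ k ∧
    Polynomial.aeval (Complex.exp (2 * Real.pi * Complex.I * (m : ℂ) / (b : ℂ) ^ k)) (mask D) = 0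

/-- Condition (P1). -/
def CondP1 (b : ℕ) (D : Finset ℕ) : Prop :=
  ∀ d : ℕ, d ∣ b → 1 < d → ∃ j : ℕ, (cyclotomic d ℤ).comp (X ^ b ^ j) ∣ mask D

lemma cyclotomic_dvd_X_pow_sub_one_of_dvd (R : Type*) [Ring R] {d n : ℕ} (h : d ∣ n) :
    cyclotomic d R ∣ X ^ n - 1 :=
  (cyclotomic.dvd_X_pow_sub_one d R).trans (dvd_pow_sub_one_of_dvd h)

lemma cyclotomic_dvd_of_X_pow_sub_one_dvd_sub_geom_sum {R : Type*} [Ring R] {b d : ℕ} {P : R[X]}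
    (hP : (X ^ b - 1 : R[X]) ∣ P - ∑ i ∈ Finset.range b, X ^ i) (hdb : d ∣ b) (hd : d ≠ 1) :
    cyclotomic d R ∣ P :=
  (dvd_sub_left (cyclotomic_dvd_geom_sum_of_dvd R hdb hd)).mp
    ((cyclotomic_dvd_X_pow_sub_one_of_dvd R hdb).trans hP)

lemma comp_X_pow_dvd_X_pow_mul_sub_one {R : Type*} [CommRing R] {p : R[X]} {n : ℕ}
    (hp : p ∣ X ^ n - 1) (m : ℕ) : p.comp (X ^ m) ∣ X ^ (m * n) - 1 := by
  simpa [sub_comp, pow_comp, ← pow_mul] using map_dvd (compRingHom (X ^ m)) hp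

lemma condP1_of_dvd_sub_prod_comp {b L : ℕ} {s : Finset ℕ} {P : ℕ → ℤ[X]} {l : ℕ → ℕ}
    (hl : ∀ i ∈ s, l i ≤ L)
    (hP : (X ^ b - 1 : ℤ[X]) ∣ ∏ i ∈ s, P i - ∑ i ∈ Finset.range b, X ^ i) {D : Finset ℕ}
    (hD : (X ^ b ^ (L + 1) - 1 : ℤ[X]) ∣ mask D - ∏ i ∈ s, (P i).comp (X ^ b ^ l i)) :
    CondP1 b D := by
  intro d hdb hd
  have hprime : Prime (cyclotomic d ℤ) :=
    UniqueFactorizationMonoid.irreducible_iff_prime.mp (cyclotomic.irreducible (by omega))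
  obtain ⟨i, hi, hPi⟩ := hprime.exists_mem_finset_dvd
    (cyclotomic_dvd_of_X_pow_sub_one_dvd_sub_geom_sum hP hdb hd.ne')
  have hprod : (cyclotomic d ℤ).comp (X ^ b ^ l i) ∣ ∏ i ∈ s, (P i).comp (X ^ b ^ l i) :=
    (map_dvd (compRingHom _) hPi).trans (Finset.dvd_prod_of_mem _ hi)
  have hX : (cyclotomic d ℤ).comp (X ^ b ^ l i) ∣ X ^ b ^ (L + 1) - 1 := by
    have h := comp_X_pow_dvd_X_pow_mul_sub_one
      (cyclotomic_dvd_X_pow_sub_one_of_dvd ℤ hdb) (b ^ l i)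
    rw [← pow_succ] at h
    exact h.trans (dvd_pow_sub_one_of_dvd (pow_dvd_pow b (Nat.succ_le_succ (hl i hi))))
  exact ⟨l i, (dvd_sub_left hprod).mp (hX.trans hD)⟩

lemma aeval_eq_zero_of_cyclotomic_comp_X_pow_dvd {R : Type*} [CommRing R] [IsDomain R]
    {p : ℤ[X]} {d n : ℕ} (hp : (cyclotomic d ℤ).comp (X ^ n) ∣ p) (hd : 0 < d) {z : R}
    (hz : IsPrimitiveRoot (z ^ n) d) : aeval z p = 0 := by
  obtain ⟨q, rfl⟩ := hp
  have hroot : aeval (z ^ n) (cyclotomic d ℤ) = 0 := by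
    simpa [aeval_def, eval₂_eq_eval_map] using hz.isRoot_cyclotomic hd
  simp [aeval_comp, hroot]

lemma CondP1.kenyon {b : ℕ} {D : Finset ℕ} (hD : CondP1 b D) (hb : 1 < b) : Kenyon b D := by
  intro m hm
  obtain ⟨t, m₀, hbm₀, rfl⟩ := Nat.exists_eq_pow_mul_and_not_dvd (n := m) (by omega) b hb.ne'
  set ω : ℂ := Complex.exp (2 * Real.pi * Complex.I / b)
  have hω : IsPrimitiveRoot ω b := Complex.isPrimitiveRoot_exp b (by omega)
  have hdb : orderOf (ω ^ m₀) ∣ b :=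
    orderOf_dvd_of_pow_eq_one (by rw [pow_right_comm, hω.pow_eq_one, one_pow])
  have hd : 1 < orderOf (ω ^ m₀) := Nat.one_lt_iff_ne_zero_and_ne_one.mpr
    ⟨(Nat.pos_of_dvd_of_pos hdb (by omega)).ne',
      fun h => hbm₀ ((hω.pow_eq_one_iff_dvd m₀).mp (orderOf_eq_one_iff.mp h))⟩
  obtain ⟨j, hj⟩ := hD _ hdb hd
  have hz : Complex.exp (2 * Real.pi * Complex.I * ((b ^ t * m₀ : ℕ) : ℂ) / (b : ℂ) ^ (j + t + 1))
        ^ (b ^ j) = ω ^ m₀ := by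
    have hbC : (b : ℂ) ≠ 0 := by exact_mod_cast (by omega : b ≠ 0)
    rw [← Complex.exp_nat_mul, ← Complex.exp_nat_mul]
    congr 1
    push_cast
    field_simp
    ring
  refine ⟨j + t + 1, by omega, aeval_eq_zero_of_cyclotomic_comp_X_pow_dvd hj (by omega) ?_⟩
  rw [hz]
  exact IsPrimitiveRoot.orderOf _

theorem stmt5_general (b k : ℕ) (hb : 2 ≤ b) (E : ℕ → Finset ℕ)
    (l : ℕ → ℕ) (hlmono : ∀ i : ℕ, i < k → l i ≤ l (i + 1))
    (hE : (X ^ b - 1 : Polynomial ℤ) ∣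
      ((∏ i ∈ Finset.range (k + 1), mask (E i)) - ∑ i ∈ Finset.range b, (X : Polynomial ℤ) ^ i))
    (D' : Finset ℕ)
    (hD' : (X ^ b ^ (l k + 1) - 1 : Polynomial ℤ) ∣
      (mask D' - ∏ i ∈ Finset.range (k + 1), (mask (E i)).comp (X ^ b ^ l i))) :
    CondP1 b D' ∧ Kenyon b D' := by
  have hmono : MonotoneOn l (Set.Iic k) :=
    monotoneOn_of_le_succ Set.ordConnected_Iic fun i _ _ hi => hlmono i (Order.succ_le_iff.mp hi)
  have hl : ∀ i ∈ Finset.range (k + 1), l i ≤ l k := fun i hi =>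
    hmono (Finset.mem_range_succ_iff.mp hi) Set.self_mem_Iic (Finset.mem_range_succ_iff.mp hi)
  have hP1 : CondP1 b D' := condP1_of_dvd_sub_prod_comp hl hE hD'
  exact ⟨hP1, hP1.kenyon hb⟩

/-- A weak product-form digit set satisfies (P1), hence the Kenyon condition. -/
theorem stmt5 (b k : ℕ) (hb : 2 ≤ b) (E : ℕ → Finset ℕ)
    (l : ℕ → ℕ) (hl0 : l 0 = 0) (hlmono : ∀ i : ℕ, i < k → l i ≤ l (i + 1))
    (hE : (X ^ b - 1 : Polynomial ℤ) ∣
      ((∏ i ∈ Finset.range (k + 1), mask (E i)) - ∑ i ∈ Finset.range b, (X : Polynomial ℤ) ^ i))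
    (D' : Finset ℕ)
    (hD' : (X ^ b ^ (l k + 1) - 1 : Polynomial ℤ) ∣
      (mask D' - ∏ i ∈ Finset.range (k + 1), (mask (E i)).comp (X ^ b ^ l i))) :
    CondP1 b D' ∧ Kenyon b D' :=
  stmt5_general b k hb E l hlmono hE D' hD'
end

section
/- Let b ≥ 2 and let D be a finite nonempty set of nonnegative integers satisfying the Kenyon condition with respect to b (for example, D the digit set of a self-similar measure μ(b, #D, D) that is absolutely continuous with respect to Lebesgue measure). Then b divides #D, i.e., #D = b·k for some integer k ≥ 1. -/
open Polynomial

/-! For a prime `p` with `p ^ a ∥ b` write `b = p ^ a * c`, and let `L = deg P_D`. The Kenyon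
condition for `m = p ^ e * c ^ L` gives a root of `P_D` of exact order `p ^ (a k - e) * c ^ (k - L)`.
Since `Φ_n ∣ P_D` forces `φ(n) ≤ L`, the `c`-part must vanish, so `Φ_{p^s} ∣ P_D` with
`s = a k - e ≡ -e (mod a)`. Letting `e` run over `0, …, a - 1` yields `a` distinct irreducible
factors `Φ_{p^s}` of `P_D`, each with `Φ_{p^s}(1) = p`, hence `p ^ a ∣ P_D(1) = #D`. -/

lemma mask_eval_one (D : Finset ℕ) : (mask D).eval 1 = D.card := by
  simp [mask, eval_finsetSum]

lemma mask_ne_zero {D : Finset ℕ} (hD : D.Nonempty) : mask D ≠ 0 := by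
  intro h
  have := mask_eval_one D
  rw [h, eval_zero] at this
  exact hD.card_ne_zero (by exact_mod_cast this.symm)

lemma Complex.isPrimitiveRoot_exp_of_mul_eq {m N M w : ℕ} (hN : N ≠ 0) (hM : M ≠ 0)
    (hw : w.Coprime M) (h : m * M = N * w) :
    IsPrimitiveRoot (exp (2 * Real.pi * I * m / N)) M := by
  have hfrac : (m : ℂ) / N = w / M := by
    rw [div_eq_div_iff (by exact_mod_cast hN) (by exact_mod_cast hM)]
    exact_mod_cast h.trans (mul_comm N w)
  rw [mul_div_assoc, hfrac]
  exact isPrimitiveRoot_exp_of_coprime w M hM hw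

lemma cyclotomic_dvd_of_aeval_eq_zero {K : Type*} [Field K] [CharZero K] {M : ℕ} (hM : 0 < M)
    {z : K} (hz : IsPrimitiveRoot z M) {P : ℤ[X]} (h : aeval z P = 0) : cyclotomic M ℤ ∣ P := by
  rw [cyclotomic_eq_minpoly hz hM]
  exact minpoly.isIntegrallyClosed_dvd (hz.isIntegral hM) h

lemma isRelPrime_cyclotomic {m n : ℕ} (hm : 0 < m) (hmn : m ≠ n) :
    IsRelPrime (cyclotomic m ℤ) (cyclotomic n ℤ) := by
  refine (cyclotomic.irreducible hm).isRelPrime_iff_not_dvd.mpr fun hdvd => hmn ?_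
  have hn : 0 < n := Nat.pos_of_ne_zero fun hn =>
    (cyclotomic.irreducible hm).not_isUnit (isUnit_of_dvd_one (by simpa [hn] using hdvd))
  exact cyclotomic_injective <| eq_of_monic_of_associated (cyclotomic.monic _ _)
    (cyclotomic.monic _ _) <|
    (cyclotomic.irreducible hm).associated_of_dvd (cyclotomic.irreducible hn) hdvd

lemma le_totient_prime_pow {p : ℕ} (hp : p.Prime) (s : ℕ) : s ≤ (p ^ s).totient := by
  cases s with
  | zero => simp
  | succ n =>
    rw [Nat.totient_prime_pow_succ hp]
    have := Nat.lt_pow_self hp.one_lt (n := n)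
    have := Nat.le_mul_of_pos_right (p ^ n) (Nat.sub_pos_of_lt hp.one_lt)
    omega

lemma prime_pow_card_dvd_eval_one {p : ℕ} (hp : p.Prime) {P : ℤ[X]} {T : Finset ℕ}
    (hT : ∀ s ∈ T, 0 < s ∧ cyclotomic (p ^ s) ℤ ∣ P) : (p : ℤ) ^ T.card ∣ P.eval 1 := by
  have := Fact.mk hp
  have hprod : (∏ s ∈ T, cyclotomic (p ^ s) ℤ) ∣ P :=
    Finset.prod_dvd_of_isRelPrime
      (fun s _ t _ hst => isRelPrime_cyclotomic (pow_pos hp.pos s)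
        fun h => hst (Nat.pow_right_injective hp.two_le h))
      fun s hs => (hT s hs).2
  have heval : (∏ s ∈ T, cyclotomic (p ^ s) ℤ).eval 1 = (p : ℤ) ^ T.card := by
    rw [eval_prod, Finset.prod_eq_pow_card]
    intro s hs
    obtain ⟨n, rfl⟩ := Nat.exists_eq_add_one_of_ne_zero (hT s hs).1.ne'
    exact eval_one_cyclotomic_prime_pow n
  exact heval ▸ eval_dvd hprod

lemma Kenyon.exists_cyclotomic_prime_pow_dvd {b : ℕ} (hb : b ≠ 0) {D : Finset ℕ}
    (hD : D.Nonempty) (hK : Kenyon b D) {p : ℕ} (hp : p.Prime) {e : ℕ}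
    (he : e < b.factorization p) :
    ∃ k, 1 ≤ k ∧ cyclotomic (p ^ (b.factorization p * k - e)) ℤ ∣ mask D := by
  set a := b.factorization p
  set c := ordCompl[p] b
  have hbc : p ^ a * c = b := Nat.ordProj_mul_ordCompl_eq_self b p
  have hpc : p.Coprime c := (hp.coprime_iff_not_dvd).mpr (Nat.not_dvd_ordCompl hp hb)
  have hc : 0 < c := Nat.ordCompl_pos p hb
  set L := (mask D).natDegree
  obtain ⟨k, hk, hroot⟩ := hK (p ^ e * c ^ L) (Nat.mul_pos (pow_pos hp.pos e) (pow_pos hc L))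
  set s := a * k - e
  have hks : k ≤ s := by
    have : k + e ≤ a * k := by nlinarith
    omega
  set M := p ^ s * c ^ (k - L)
  have hM : 0 < M := Nat.mul_pos (pow_pos hp.pos s) (pow_pos hc _)
  have heq : p ^ e * c ^ L * M = b ^ k * c ^ (L - k) := by
    have hes : e + s = a * k := by
      have : a ≤ a * k := Nat.le_mul_of_pos_right a hk
      omega
    have hLk : L + (k - L) = k + (L - k) := by omega
    calc p ^ e * c ^ L * M = p ^ (e + s) * c ^ (L + (k - L)) := by ring
      _ = p ^ (a * k) * c ^ (k + (L - k)) := by rw [hes, hLk]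
      _ = b ^ k * c ^ (L - k) := by rw [← hbc]; ring
  have hcop : (c ^ (L - k)).Coprime M := by
    rcases le_total k L with h | h
    · simpa [M, Nat.sub_eq_zero_of_le h] using (hpc.pow s (L - k)).symm
    · simp [Nat.sub_eq_zero_of_le h]
  have hprim := Complex.isPrimitiveRoot_exp_of_mul_eq (pow_ne_zero k hb) hM.ne' hcop heq
  push_cast at hprim hroot
  have hdvd := cyclotomic_dvd_of_aeval_eq_zero hM hprim hroot
  have hkL : k ≤ L := by
    have hφ : M.totient ≤ L := by
      rw [← natDegree_cyclotomic M ℤ]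
      exact natDegree_le_of_dvd hdvd (mask_ne_zero hD)
    have : (p ^ s).totient ≤ M.totient :=
      Nat.le_of_dvd (Nat.totient_pos.mpr hM) (Nat.totient_dvd_of_dvd (dvd_mul_right _ _))
    have := le_totient_prime_pow hp s
    omega
  refine ⟨k, hk, ?_⟩
  simpa [M, Nat.sub_eq_zero_of_le hkL] using hdvd

lemma Kenyon.pow_factorization_dvd_card {b : ℕ} (hb : b ≠ 0) {D : Finset ℕ}
    (hD : D.Nonempty) (hK : Kenyon b D) {p : ℕ} (hp : p.Prime) :
    p ^ b.factorization p ∣ D.card := by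
  set a := b.factorization p
  choose! k hk hdvd using fun e (he : e < a) => hK.exists_cyclotomic_prime_pow_dvd hb hD hp he
  have hinj : Set.InjOn (fun e => a * k e - e) (Finset.range a) := by
    intro e₁ he₁ e₂ he₂ h
    simp only [Finset.coe_range, Set.mem_Iio] at he₁ he₂ h
    have hle₁ : a ≤ a * k e₁ := Nat.le_mul_of_pos_right a (hk e₁ he₁)
    have hle₂ : a ≤ a * k e₂ := Nat.le_mul_of_pos_right a (hk e₂ he₂)
    have hsum : e₁ + a * k e₂ = e₂ + a * k e₁ := by omega
    simpa only [Nat.add_mul_mod_self_left, Nat.mod_eq_of_lt he₁, Nat.mod_eq_of_lt he₂] using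
      congrArg (· % a) hsum
  have hT : ∀ s ∈ (Finset.range a).image (fun e => a * k e - e),
      0 < s ∧ cyclotomic (p ^ s) ℤ ∣ mask D := by
    simp only [Finset.mem_image, Finset.mem_range]
    rintro _ ⟨e, he, rfl⟩
    have : a ≤ a * k e := Nat.le_mul_of_pos_right a (hk e he)
    exact ⟨by omega, hdvd e he⟩
  have := prime_pow_card_dvd_eval_one hp hT
  rw [Finset.card_image_of_injOn hinj, Finset.card_range, mask_eval_one] at this
  exact_mod_cast this

/-- If a finite nonempty `D` satisfies the Kenyon condition with respect to `b`, then
`#D = b·k` for some integer `k ≥ 1`. -/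
theorem stmt19 (b : ℕ) (hb : 2 ≤ b) (D : Finset ℕ) (hD : D.Nonempty) (hK : Kenyon b D) :
    ∃ k : ℕ, 1 ≤ k ∧ D.card = b * k := by
  have hb0 : b ≠ 0 := by omega
  have hbD : b ∣ D.card := (Nat.factorization_prime_le_iff_dvd hb0 hD.card_ne_zero).mp
    fun p hp => (hp.pow_dvd_iff_le_factorization hD.card_ne_zero).mp
      (hK.pow_factorization_dvd_card hb0 hD hp)
  obtain ⟨k, hk⟩ := hbD
  refine ⟨k, Nat.pos_of_ne_zero fun h0 => hD.card_ne_zero ?_, hk⟩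
  rw [hk, h0, mul_zero]
end
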